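/- Let A be a symmetric n×n matrix with entries in {0,1}, with eigenvalues λ_1 ≥ ⋯ ≥ λ_n, satisfying λ_2(A) − λ_n(A) = n/√2. Then n is divisible by 4, all row sums of A equal n/2 (the corresponding graph is regular of degree n/2), and the trace of A equals n/2 (exactly half of the vertices carry a self-loop). -/

import Mathlib

/-!
Write `x = λ₁`, `y = λ₂`, `z = λₙ` and let `S` be the number of ones in `A`. Since `A` is a
symmetric `(0,1)`-matrix, `S = tr A² = ∑ λᵢ² ≥ x² + y² + z²`, and the Rayleigh quotient at the
all-ones vector gives `S ≤ n x`. With `(y - z)² = n²/2` these combine into the identity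
`2 (x - n/2)² + 2 (n x - S) + 2 (S - x² - y² - z²) + (y + z)² = 0` of nonnegative terms.
Hence `x = n/2`, `z = -y`, all other eigenvalues vanish, and the all-ones vector is a
`λ₁`-eigenvector, i.e. `A` is `n/2`-regular. Then `tr A = x + y + z = n/2`, and the integer
`tr A⁴ = x⁴ + 2 y⁴ = 3 n⁴ / 32` forces `4 ∣ n`.
-/

open Matrix

theorem Finset.sum_comp_eq_of_map_univ_val_eq {ι α M : Type*} [Fintype ι] [AddCommMonoid M]
    {μ ν : ι → α} (h : Finset.univ.val.map μ = Finset.univ.val.map ν) (f : α → M) :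
    ∑ i, f (μ i) = ∑ i, f (ν i) := by
  simpa only [Multiset.map_map, Finset.sum_map_val, Function.comp_apply] using
    congrArg (fun s ↦ (s.map f).sum) h

theorem sum_pow_eq_sum_pow_of_sum_sq_le {ι R : Type*} [Fintype ι] [CommRing R] [LinearOrder R]
    [IsStrictOrderedRing R] (f : ι → R) (s : Finset ι) (h : ∑ i, f i ^ 2 ≤ ∑ i ∈ s, f i ^ 2)
    {k : ℕ} (hk : k ≠ 0) : ∑ i, f i ^ k = ∑ i ∈ s, f i ^ k := by
  classical
  have hcompl : ∑ i ∈ sᶜ, f i ^ 2 = 0 := by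
    have := Finset.sum_add_sum_compl s (fun i ↦ f i ^ 2)
    linarith [Finset.sum_nonneg fun i (_ : i ∈ sᶜ) ↦ sq_nonneg (f i)]
  refine (Finset.sum_subset (Finset.subset_univ s) fun i _ hi ↦ ?_).symm
  have := (Finset.sum_eq_zero_iff_of_nonneg fun i _ ↦ sq_nonneg (f i)).mp hcompl i
    (Finset.mem_compl.mpr hi)
  rw [pow_eq_zero_iff two_ne_zero |>.mp this, zero_pow hk]

theorem eq_of_sq_sub_eq_half_sq {x y z S m : ℝ} (hS : S ≤ x * m)
    (h3 : x ^ 2 + y ^ 2 + z ^ 2 ≤ S) (hgap : (y - z) ^ 2 = m ^ 2 / 2) :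
    x = m / 2 ∧ z = -y ∧ S = x * m ∧ S = x ^ 2 + y ^ 2 + z ^ 2 := by
  have key : 2 * (x - m / 2) ^ 2 + 2 * (x * m - S) + 2 * (S - (x ^ 2 + y ^ 2 + z ^ 2))
      + (y + z) ^ 2 = 0 := by
    linear_combination -hgap
  have hx : (x - m / 2) ^ 2 = 0 := by nlinarith [sq_nonneg (x - m / 2), sq_nonneg (y + z)]
  have hyz : (y + z) ^ 2 = 0 := by nlinarith [sq_nonneg (x - m / 2), sq_nonneg (y + z)]
  refine ⟨by linarith [pow_eq_zero_iff two_ne_zero |>.mp hx],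
    by linarith [pow_eq_zero_iff two_ne_zero |>.mp hyz], by nlinarith, by nlinarith⟩

theorem Nat.four_dvd_of_dvd_three_mul_pow_four {n : ℕ} (h : 32 ∣ 3 * n ^ 4) : 4 ∣ n := by
  rcases eq_or_ne n 0 with rfl | hn
  · exact dvd_zero 4
  have h32 : 2 ^ 5 ∣ n ^ 4 := Nat.Coprime.dvd_of_dvd_mul_left (by norm_num) h
  rw [Nat.prime_two.pow_dvd_iff_le_factorization (pow_ne_zero 4 hn), Nat.factorization_pow,
    Finsupp.smul_apply, smul_eq_mul] at h32
  rw [show 4 = 2 ^ 2 by rfl, Nat.prime_two.pow_dvd_iff_le_factorization hn]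
  omega

namespace Matrix.IsHermitian

variable {ι : Type*} [Fintype ι] [DecidableEq ι]

theorem trace_pow_eq_sum_eigenvalues_pow {𝕜 : Type*} [RCLike 𝕜] {A : Matrix ι ι 𝕜}
    (hA : A.IsHermitian) (k : ℕ) : (A ^ k).trace = ∑ i, (hA.eigenvalues i : 𝕜) ^ k := by
  conv_lhs => rw [hA.spectral_theorem]
  rw [← map_pow, diagonal_pow, Unitary.conjStarAlgAut_apply,
    trace_mul_cycle, Unitary.coe_star_mul_self, one_mul, trace_diagonal]
  rfl

variable {A : Matrix ι ι ℝ} (hA : A.IsHermitian) {c : ℝ}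

theorem trace_pow_eq_sum_pow_of_map_univ_val_eq {μ : ι → ℝ}
    (h : Finset.univ.val.map μ = Finset.univ.val.map hA.eigenvalues) (k : ℕ) :
    (A ^ k).trace = ∑ i, μ i ^ k := by
  simpa using (hA.trace_pow_eq_sum_eigenvalues_pow k).trans
    (Finset.sum_comp_eq_of_map_univ_val_eq h (· ^ k)).symm

theorem posSemidef_smul_one_sub (hc : ∀ i, hA.eigenvalues i ≤ c) : (c • 1 - A).PosSemidef := by
  have hdiag : (diagonal fun i ↦ c - hA.eigenvalues i).PosSemidef :=
    PosSemidef.diagonal fun i ↦ sub_nonneg.mpr (hc i)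
  convert hdiag.mul_mul_conjTranspose_same (hA.eigenvectorUnitary : Matrix ι ι ℝ) using 1
  conv_lhs => rw [hA.spectral_theorem]
  rw [← diagonal_sub, ← smul_one_eq_diagonal, mul_sub, sub_mul, mul_smul_comm, smul_mul_assoc,
    mul_one, ← star_eq_conjTranspose, Unitary.mul_star_self_of_mem hA.eigenvectorUnitary.2,
    Unitary.conjStarAlgAut_apply]
  rfl

theorem dotProduct_mulVec_le (hc : ∀ i, hA.eigenvalues i ≤ c) (v : ι → ℝ) :
    v ⬝ᵥ A *ᵥ v ≤ c * (v ⬝ᵥ v) := by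
  have := (hA.posSemidef_smul_one_sub hc).dotProduct_mulVec_nonneg v
  rwa [star_trivial, sub_mulVec, smul_mulVec, one_mulVec, dotProduct_sub, dotProduct_smul,
    smul_eq_mul, sub_nonneg] at this

theorem mulVec_eq_smul_of_dotProduct_mulVec_eq (hc : ∀ i, hA.eigenvalues i ≤ c) {v : ι → ℝ}
    (h : v ⬝ᵥ A *ᵥ v = c * (v ⬝ᵥ v)) : A *ᵥ v = c • v := by
  have := ((hA.posSemidef_smul_one_sub hc).dotProduct_mulVec_zero_iff v).mp (by
    rw [star_trivial, sub_mulVec, smul_mulVec, one_mulVec, dotProduct_sub, dotProduct_smul,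
      smul_eq_mul, h, sub_self])
  rw [sub_mulVec, smul_mulVec, one_mulVec, sub_eq_zero] at this
  exact this.symm

theorem sum_sum_le_of_eigenvalues_le (hc : ∀ i, hA.eigenvalues i ≤ c) :
    ∑ a, ∑ b, A a b ≤ c * Fintype.card ι := by
  simpa [dotProduct, mulVec] using hA.dotProduct_mulVec_le hc 1

theorem sum_eq_of_sum_sum_eq (hc : ∀ i, hA.eigenvalues i ≤ c)
    (h : ∑ a, ∑ b, A a b = c * Fintype.card ι) (a : ι) : ∑ b, A a b = c := by
  have := hA.mulVec_eq_smul_of_dotProduct_mulVec_eq hc (v := 1) (by simpa [dotProduct, mulVec])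
  simpa [mulVec, dotProduct] using congrFun this a

theorem eigenvalues_le_of_antitone {n : ℕ} {A : Matrix (Fin n) (Fin n) ℝ} (hA : A.IsHermitian)
    {μ : Fin n → ℝ} (hμ : Antitone μ)
    (h : Finset.univ.val.map μ = Finset.univ.val.map hA.eigenvalues) (h0 : 0 < n) (i : Fin n) :
    hA.eigenvalues i ≤ μ ⟨0, h0⟩ := by
  have : hA.eigenvalues i ∈ Finset.univ.val.map μ :=
    h ▸ Multiset.mem_map_of_mem _ (Finset.mem_univ i)
  obtain ⟨j, -, hj⟩ := Multiset.mem_map.mp this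
  exact hj ▸ hμ (Nat.zero_le j)

end Matrix.IsHermitian

section ZeroOne

variable {ι : Type*} [Fintype ι] [DecidableEq ι] {A : Matrix ι ι ℝ}

theorem exists_intCast_trace_pow (hA : ∀ a b, ∃ m : ℤ, A a b = m) (k : ℕ) :
    ∃ t : ℤ, (A ^ k).trace = t := by
  choose B hB using hA
  refine ⟨((Matrix.of B) ^ k).trace, ?_⟩
  rw [show A = (Matrix.of B).map (Int.castRingHom ℝ) from ext hB, ← Matrix.map_pow,
    ← AddMonoidHom.map_trace]
  rfl

theorem trace_sq_eq_sum_sum_of_zero_one (hA : A.IsHermitian)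
    (hA01 : ∀ a b, A a b = 0 ∨ A a b = 1) : (A ^ 2).trace = ∑ a, ∑ b, A a b := by
  simp only [sq, trace, diag, mul_apply]
  refine Finset.sum_congr rfl fun a _ ↦ Finset.sum_congr rfl fun b _ ↦ ?_
  rw [show A b a = A a b by simpa using hA.apply a b]
  rcases hA01 a b with h | h <;> simp [h]

theorem four_dvd_of_trace_pow_four_eq (hA01 : ∀ a b, A a b = 0 ∨ A a b = 1) {n : ℕ}
    (h : (A ^ 4).trace = 3 * n ^ 4 / 32) : 4 ∣ n := by
  have hAint : ∀ a b, ∃ m : ℤ, A a b = m := fun a b ↦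
    (hA01 a b).elim (fun h ↦ ⟨0, by simp [h]⟩) (fun h ↦ ⟨1, by simp [h]⟩)
  obtain ⟨t, ht⟩ := exists_intCast_trace_pow hAint 4
  refine Nat.four_dvd_of_dvd_three_mul_pow_four (Int.natCast_dvd_natCast.mp ⟨t, ?_⟩)
  have : (3 * n ^ 4 : ℝ) = 32 * t := by rw [← ht, h]; ring
  exact_mod_cast this

end ZeroOne

/-- If a symmetric `n × n` `(0,1)`-matrix `A`, with eigenvalues `μ` in
nonincreasing order, satisfies `λ_2(A) - λ_n(A) = n / √2`, then `4 ∣ n`, every row sum of `A`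
equals `n/2` (the graph is `n/2`-regular), and the trace of `A` is `n/2` (exactly half the
vertices carry a self-loop). -/
theorem spread_10_equality_structure (n : ℕ) (hn : 2 ≤ n)
    (A : Matrix (Fin n) (Fin n) ℝ) (hA : A.IsHermitian)
    (hA01 : ∀ a b, A a b = 0 ∨ A a b = 1)
    (μ : Fin n → ℝ) (hmono : Antitone μ)
    (hperm : Finset.univ.val.map μ = Finset.univ.val.map hA.eigenvalues)
    (heq : μ ⟨1, by omega⟩ - μ ⟨n - 1, by omega⟩ = (n : ℝ) / Real.sqrt 2) :
    4 ∣ n ∧ (∀ a, ∑ b, A a b = (n : ℝ) / 2) ∧ A.trace = (n : ℝ) / 2 := by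
  have hn3 : 3 ≤ n := by
    by_contra! h
    obtain rfl : n = 2 := by omega
    have : (0 : ℝ) < (2 : ℕ) / √2 := by positivity
    exact this.ne' (heq.symm.trans (sub_self _))
  set x := μ ⟨0, by omega⟩
  set y := μ ⟨1, by omega⟩
  set z := μ ⟨n - 1, by omega⟩
  have hmax := hA.eigenvalues_le_of_antitone hmono hperm (by omega)
  have htrace := hA.trace_pow_eq_sum_pow_of_map_univ_val_eq hperm
  have hS := trace_sq_eq_sum_sum_of_zero_one hA hA01
  set s : Finset (Fin n) := {⟨0, by omega⟩, ⟨1, by omega⟩, ⟨n - 1, by omega⟩}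
  have hs (g : ℝ → ℝ) : ∑ i ∈ s, g (μ i) = g x + g y + g z := by
    rw [Finset.sum_insert (by simp [Fin.ext_iff]; omega),
      Finset.sum_insert (by simp [Fin.ext_iff]; omega), Finset.sum_singleton, add_assoc]
  have hsq : x ^ 2 + y ^ 2 + z ^ 2 ≤ ∑ a, ∑ b, A a b := by
    rw [← hS, htrace, ← hs (· ^ 2)]
    exact Finset.sum_le_univ_sum_of_nonneg fun i ↦ sq_nonneg _
  have hgap : (y - z) ^ 2 = (n : ℝ) ^ 2 / 2 := by rw [heq, div_pow, Real.sq_sqrt zero_le_two]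
  obtain ⟨hx, hzy, hSx, hS3⟩ := eq_of_sq_sub_eq_half_sq
    (by simpa using hA.sum_sum_le_of_eigenvalues_le hmax) hsq hgap
  have hpow {k : ℕ} (hk : k ≠ 0) : (A ^ k).trace = x ^ k + y ^ k + z ^ k := by
    have hconc : ∑ i, μ i ^ 2 = ∑ i ∈ s, μ i ^ 2 := by rw [hs (· ^ 2), ← htrace, hS, hS3]
    rw [htrace, sum_pow_eq_sum_pow_of_sum_sq_le μ s hconc.le hk, hs (· ^ k)]
  have hy : y ^ 2 = (n : ℝ) ^ 2 / 8 := by linear_combination hgap / 4 + (3 * y - z) / 4 * hzy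
  refine ⟨four_dvd_of_trace_pow_four_eq hA01 ?_, fun a ↦ ?_, ?_⟩
  · rw [hpow four_ne_zero, hx, hzy]
    linear_combination 2 * (y ^ 2 + (n : ℝ) ^ 2 / 8) * hy
  · rw [← hx]
    exact hA.sum_eq_of_sum_sum_eq hmax (by simpa using hSx) a
  · rw [← pow_one A, hpow one_ne_zero, hx, hzy]
    ring
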